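/- arXiv:1110.2392 — 3 statements merged into one kernel-verified Lean document; each statement's English description precedes it below -/
import Mathlib

section
/- If 0 < s ≤ √c/2 with c > 0, then the series ∑_{j=1}^∞ e^{j(2 - cj/s²)} converges and its sum is at most 4s²/c. -/
/-!
Put `t = c / s² ≥ 4`. Since `n ≤ n²`, each term satisfies `e^(2n - tn²) ≤ r^n` with
`r = e^(-t/2)`, and `e^(t/2) ≥ t/2` gives `r ≤ 2/t ≤ 1/2`. The series is thus dominated by
the geometric series `∑ r^n = r / (1 - r) ≤ 2r ≤ 4/t = 4s²/c`.
-/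

open Real

lemma exp_two_mul_sub_mul_sq_le_pow {t : ℝ} (ht : 4 ≤ t) (n : ℕ) :
    exp (2 * n - t * n ^ 2) ≤ exp (-(t / 2)) ^ n := by
  rw [← exp_nat_mul, exp_le_exp]
  have hn : (n : ℝ) ≤ n ^ 2 := by exact_mod_cast Nat.le_self_pow two_ne_zero n
  nlinarith

lemma exp_neg_half_le_two_div {t : ℝ} (ht : 0 < t) : exp (-(t / 2)) ≤ 2 / t := by
  rw [exp_neg, ← inv_div t 2]
  exact inv_anti₀ (by positivity) ((le_add_of_nonneg_right zero_le_one).trans (add_one_le_exp _))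

lemma tsum_pow_succ_le_two_mul {r : ℝ} (h₀ : 0 ≤ r) (h : r ≤ 1 / 2) :
    ∑' n : ℕ, r ^ (n + 1) ≤ 2 * r := by
  simp_rw [pow_succ, tsum_mul_right, tsum_geometric_of_lt_one h₀ (by linarith)]
  rw [inv_mul_le_iff₀ (by linarith)]
  nlinarith

theorem summable_exp_two_mul_sub_mul_sq_and_tsum_le {t : ℝ} (ht : 4 ≤ t) :
    Summable (fun j : ℕ => exp (2 * (j + 1) - t * (j + 1) ^ 2)) ∧
    ∑' j : ℕ, exp (2 * (j + 1) - t * (j + 1) ^ 2) ≤ 4 / t := by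
  set r := exp (-(t / 2))
  have hr : r ≤ 2 / t := exp_neg_half_le_two_div (by linarith)
  have hr_half : r ≤ 1 / 2 := hr.trans (by rw [div_le_div_iff₀] <;> linarith)
  have hle (j : ℕ) : exp (2 * (j + 1) - t * (j + 1) ^ 2) ≤ r ^ (j + 1) := by
    exact_mod_cast exp_two_mul_sub_mul_sq_le_pow ht (j + 1)
  have hgeom : Summable (fun j : ℕ => r ^ (j + 1)) :=
    (summable_nat_add_iff 1).2 (summable_geometric_of_lt_one (exp_pos _).le (by linarith))
  have hsum := hgeom.of_nonneg_of_le (fun _ => (exp_pos _).le) hle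
  refine ⟨hsum, ?_⟩
  calc _ ≤ ∑' j : ℕ, r ^ (j + 1) := hsum.tsum_le_tsum hle hgeom
    _ ≤ 2 * r := tsum_pow_succ_le_two_mul (exp_pos _).le hr_half
    _ ≤ 4 / t := by linarith [show 2 * (2 / t) = 4 / t by ring]

theorem series_bound_small_s_general (s c : ℝ) (hs : 0 < s)
    (hsc : s ≤ Real.sqrt c / 2) :
    Summable (fun j : ℕ => Real.exp (2 * (j + 1) - c * (j + 1) ^ 2 / s ^ 2)) ∧
    ∑' j : ℕ, Real.exp (2 * (j + 1) - c * (j + 1) ^ 2 / s ^ 2) ≤ 4 * s ^ 2 / c := by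
  have ht : 4 ≤ c / s ^ 2 := by
    have h2s : (2 * s) ^ 2 ≤ c := (Real.le_sqrt' (by linarith)).1 (by linarith)
    rw [le_div_iff₀ (by positivity)]
    linarith
  simpa only [mul_div_right_comm c, div_div_eq_mul_div] using
    summable_exp_two_mul_sub_mul_sq_and_tsum_le ht

theorem series_bound_small_s (s c : ℝ) (hs : 0 < s) (hc : 0 < c)
    (hsc : s ≤ Real.sqrt c / 2) :
    Summable (fun j : ℕ => Real.exp (2 * (j + 1) - c * (j + 1) ^ 2 / s ^ 2)) ∧
    ∑' j : ℕ, Real.exp (2 * (j + 1) - c * (j + 1) ^ 2 / s ^ 2) ≤ 4 * s ^ 2 / c :=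
  series_bound_small_s_general s c hs hsc
end

section
/- If s > √c/2 with c > 0, then ∑_{j=1}^∞ e^{j(2 - cj/s²)} ≤ 8s²/c + e^{(1+1/e)s²/c}. -/
/-!
With `a = s² / c` the `j`-th term is `exp a * exp (-(j - a)² / a)`. Pairing the Gaussian at
`j + t` and `j - t` (`exp u + exp (-u) ≥ 2`, `exp (-t² / a) ≥ 1 - t² / a`) shows that each value
is at most `(1 - 1 / (12 a))⁻¹` times the integral over the unit interval centred at it, so the
sum is at most `exp a * √(π a) / (1 - 1 / (12 a))`. For `a ≥ 1/4` this is at most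
`a * exp a + 8 a` (a monotonicity check on the intervals cut at `1/2, 1, 2, 3, 4`), and
`a ≤ exp (a / e)`.
-/

open Real MeasureTheory

theorem two_mul_one_sub_mul_exp_neg_sq_div_le (a d t : ℝ) :
    2 * (1 - t ^ 2 / a) * exp (-d ^ 2 / a) ≤
      exp (-(d + t) ^ 2 / a) + exp (-(d - t) ^ 2 / a) := by
  obtain ⟨u, hu⟩ : ∃ u, u = 2 * d * t / a := ⟨_, rfl⟩
  have hplus : exp (-(d + t) ^ 2 / a) = exp (-d ^ 2 / a) * exp (-t ^ 2 / a) * exp (-u) := by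
    rw [← exp_add, ← exp_add, hu]; ring_nf
  have hminus : exp (-(d - t) ^ 2 / a) = exp (-d ^ 2 / a) * exp (-t ^ 2 / a) * exp u := by
    rw [← exp_add, ← exp_add, hu]; ring_nf
  have hcosh : 2 ≤ exp (-u) + exp u := by
    linarith [add_one_le_exp u, add_one_le_exp (-u)]
  have hgauss : 1 - t ^ 2 / a ≤ exp (-t ^ 2 / a) := by
    linarith [add_one_le_exp (-t ^ 2 / a), neg_div a (t ^ 2)]
  rw [hplus, hminus]
  nlinarith [exp_pos (-d ^ 2 / a), exp_pos (-t ^ 2 / a),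
    mul_le_mul_of_nonneg_left hcosh (mul_pos (exp_pos (-d ^ 2 / a)) (exp_pos (-t ^ 2 / a))).le]

theorem intervalIntegral.integral_sub_add_eq_integral_add_reflect {f : ℝ → ℝ} (hf : Continuous f)
    (y h : ℝ) :
    ∫ x in y - h..y + h, f x = ∫ t in 0..h, (f (y + t) + f (y - t)) := by
  rw [← intervalIntegral.integral_add_adjacent_intervals (b := y) (hf.intervalIntegrable _ _)
      (hf.intervalIntegrable _ _), add_comm,
    intervalIntegral.integral_add
      ((by fun_prop : Continuous fun t => f (y + t)).intervalIntegrable _ _)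
      ((by fun_prop : Continuous fun t => f (y - t)).intervalIntegrable _ _),
    intervalIntegral.integral_comp_add_left f, intervalIntegral.integral_comp_sub_left f, add_zero,
    sub_zero]

theorem integral_exp_neg_sq_sub_div (a : ℝ) :
    ∫ x, exp (-(x - a) ^ 2 / a) = √(π * a) := by
  have h := integral_sub_right_eq_self (μ := volume) (fun x => exp (-a⁻¹ * x ^ 2)) a
  rw [integral_gaussian, div_inv_eq_mul] at h
  rw [← h]
  congr 1 with x
  ring_nf

theorem integral_two_mul_one_sub_sq_div (a : ℝ) :
    ∫ t in (0 : ℝ)..1 / 2, 2 * (1 - t ^ 2 / a) = 1 - 1 / (12 * a) := by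
  rw [intervalIntegral.integral_const_mul, intervalIntegral.integral_sub intervalIntegrable_const
    (by apply Continuous.intervalIntegrable; fun_prop), intervalIntegral.integral_div, integral_pow]
  norm_num
  ring

theorem one_sub_mul_exp_neg_sq_div_le_integral (a y : ℝ) :
    (1 - 1 / (12 * a)) * exp (-(y - a) ^ 2 / a) ≤
      ∫ x in y - 1 / 2..y + 1 / 2, exp (-(x - a) ^ 2 / a) := by
  rw [intervalIntegral.integral_sub_add_eq_integral_add_reflect (by fun_prop),
    ← integral_two_mul_one_sub_sq_div, ← intervalIntegral.integral_mul_const]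
  refine intervalIntegral.integral_mono_on (by norm_num)
    (by apply Continuous.intervalIntegrable; fun_prop)
    (by apply Continuous.intervalIntegrable; fun_prop) fun t _ => ?_
  convert two_mul_one_sub_mul_exp_neg_sq_div_le a (y - a) t using 4 <;> ring

theorem sum_range_integral_le_integral {f : ℝ → ℝ} (hf : Integrable f) (hf0 : 0 ≤ f) (x₀ : ℝ)
    (n : ℕ) : ∑ k ∈ Finset.range n, ∫ x in x₀ + k..x₀ + (k + 1), f x ≤ ∫ x, f x := by
  have h := intervalIntegral.sum_integral_adjacent_intervals (μ := volume) (f := f)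
    (a := fun k : ℕ => x₀ + k) (n := n) fun k _ => hf.intervalIntegrable
  push_cast at h
  rw [h, add_zero, intervalIntegral.integral_of_le (by simp)]
  exact setIntegral_le_integral hf (Filter.Eventually.of_forall hf0)

theorem summable_and_one_sub_mul_tsum_exp_neg_sq_div_le {a : ℝ} (ha : 1 / 12 < a) :
    Summable (fun j : ℕ => exp (-((j : ℝ) + 1 - a) ^ 2 / a)) ∧
      (1 - 1 / (12 * a)) * ∑' j : ℕ, exp (-((j : ℝ) + 1 - a) ^ 2 / a) ≤ √(π * a) := by
  have hc : 0 < 1 - 1 / (12 * a) := by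
    rw [sub_pos, div_lt_one (by linarith)]; linarith
  have hint : Integrable fun x => exp (-(x - a) ^ 2 / a) := by
    have := (integrable_exp_neg_mul_sq (inv_pos.2 (by linarith : 0 < a))).comp_sub_right a
    convert this using 3 with x
    ring
  set F : ℕ → ℝ := fun j =>
    ∫ x in 1 / 2 + (j : ℝ)..1 / 2 + ((j : ℝ) + 1), exp (-(x - a) ^ 2 / a)
  have hF0 (j : ℕ) : 0 ≤ F j :=
    intervalIntegral.integral_nonneg (by linarith) fun _ _ => (exp_pos _).le
  have hFle (n : ℕ) : ∑ j ∈ Finset.range n, F j ≤ √(π * a) :=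
    (sum_range_integral_le_integral hint (fun _ => (exp_pos _).le) _ n).trans_eq
      (integral_exp_neg_sq_sub_div a)
  have hcompare (j : ℕ) : (1 - 1 / (12 * a)) * exp (-((j : ℝ) + 1 - a) ^ 2 / a) ≤ F j := by
    convert one_sub_mul_exp_neg_sq_div_le_integral a ((j : ℝ) + 1) using 2 <;> ring
  have hsum : Summable fun j : ℕ => (1 - 1 / (12 * a)) * exp (-((j : ℝ) + 1 - a) ^ 2 / a) :=
    (summable_of_sum_range_le hF0 hFle).of_nonneg_of_le (fun _ => by positivity) hcompare
  refine ⟨(summable_mul_left_iff hc.ne').1 hsum, ?_⟩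
  rw [← tsum_mul_left]
  exact (hsum.tsum_le_tsum hcompare (summable_of_sum_range_le hF0 hFle)).trans
    (Real.tsum_le_of_sum_range_le hF0 hFle)

theorem three_fifths_pow_le_exp_neg_half_mul (n : ℕ) : (3 / 5 : ℝ) ^ n ≤ exp (-(n / 2)) := by
  have hhalf : exp (1 / 2) ≤ 5 / 3 := by
    have hsq : exp (1 / 2) ^ 2 = exp 1 := by rw [← exp_nat_mul]; norm_num
    nlinarith [exp_one_lt_d9, exp_pos (1 / 2)]
  rw [show -((n : ℝ) / 2) = n * (-(1 / 2)) by ring, exp_nat_mul, exp_neg]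
  gcongr
  rw [le_inv_comm₀ (by norm_num) (exp_pos _)]
  linarith

/-- `(a - 1/12)² / a` increases and `exp (-a)` decreases on `[l, r]`, so the inequality at `a`
follows from the endpoint values `l` and `q ≤ exp (-r)`. -/
theorem sqrt_pi_mul_le_of_mem_Icc {a l r q : ℝ} (hl : 1 / 12 < l) (hla : l ≤ a) (har : a ≤ r)
    (hq0 : 0 ≤ q) (hq : q ≤ exp (-r)) (h : π * l ≤ (l - 1 / 12) ^ 2 * (1 + 8 * q) ^ 2) :
    √(π * a) ≤ (a - 1 / 12) * (1 + 8 * exp (-a)) := by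
  have hqa : (1 + 8 * q) ^ 2 ≤ (1 + 8 * exp (-a)) ^ 2 := by
    have := hq.trans (exp_le_exp.2 (neg_le_neg har))
    gcongr
  have hratio : a * (l - 1 / 12) ^ 2 ≤ l * (a - 1 / 12) ^ 2 := by
    nlinarith [mul_nonneg (sub_nonneg.2 hla) (by nlinarith : (0 : ℝ) ≤ l * a - (1 / 12) ^ 2)]
  rw [sqrt_le_iff]
  refine ⟨mul_nonneg (by linarith) (by positivity), ?_⟩
  have hl0 : 0 < l := by linarith
  rw [mul_pow]
  nlinarith [mul_le_mul_of_nonneg_left hqa (sq_nonneg (a - 1 / 12)),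
    mul_le_mul_of_nonneg_right hratio (by positivity : (0 : ℝ) ≤ (1 + 8 * q) ^ 2)]

theorem sqrt_pi_mul_le {a : ℝ} (ha : 1 / 4 ≤ a) :
    √(π * a) ≤ (a - 1 / 12) * (1 + 8 * exp (-a)) := by
  have piece (l : ℝ) (n : ℕ) (hl : 1 / 12 < l) (hla : l ≤ a) (han : a ≤ n / 2)
      (h : π * l ≤ (l - 1 / 12) ^ 2 * (1 + 8 * (3 / 5) ^ n) ^ 2) :
      √(π * a) ≤ (a - 1 / 12) * (1 + 8 * exp (-a)) :=
    sqrt_pi_mul_le_of_mem_Icc hl hla han (by positivity) (three_fifths_pow_le_exp_neg_half_mul n) h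
  have hπ := pi_lt_d2
  rcases le_or_gt a (1 / 2) with h1 | h1
  · exact piece (1 / 4) 1 (by norm_num) ha (by norm_num [h1]) (by norm_num; linarith)
  rcases le_or_gt a 1 with h2 | h2
  · exact piece (1 / 2) 2 (by norm_num) h1.le (by norm_num [h2]) (by norm_num; linarith)
  rcases le_or_gt a 2 with h3 | h3
  · exact piece 1 4 (by norm_num) h2.le (by norm_num [h3]) (by norm_num; linarith)
  rcases le_or_gt a 3 with h4 | h4
  · exact piece 2 6 (by norm_num) h3.le (by norm_num [h4]) (by norm_num; linarith)
  rcases le_or_gt a 4 with h5 | h5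
  · exact piece 3 8 (by norm_num) h4.le (by norm_num [h5]) (by norm_num; linarith)
  · exact sqrt_pi_mul_le_of_mem_Icc (l := 4) (by norm_num) h5.le le_rfl le_rfl (exp_pos _).le
      (by norm_num; linarith)

theorem tsum_exp_neg_sq_div_le {a : ℝ} (ha : 1 / 4 ≤ a) :
    ∑' j : ℕ, exp (-((j : ℝ) + 1 - a) ^ 2 / a) ≤ a * (1 + 8 * exp (-a)) := by
  have hc : 0 < 1 - 1 / (12 * a) := by
    rw [sub_pos, div_lt_one (by linarith)]; linarith
  refine le_of_mul_le_mul_left ?_ hc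
  calc (1 - 1 / (12 * a)) * ∑' j : ℕ, exp (-((j : ℝ) + 1 - a) ^ 2 / a)
      ≤ √(π * a) := (summable_and_one_sub_mul_tsum_exp_neg_sq_div_le (by linarith)).2
    _ ≤ (a - 1 / 12) * (1 + 8 * exp (-a)) := sqrt_pi_mul_le ha
    _ = (1 - 1 / (12 * a)) * (a * (1 + 8 * exp (-a))) := by field_simp

theorem le_exp_div_exp_one (x : ℝ) : x ≤ exp (x / exp 1) := by
  have h := add_one_le_exp (x / exp 1 - 1)
  rw [sub_add_cancel, exp_sub, le_div_iff₀ (exp_pos 1), div_mul_cancel₀ _ (exp_pos 1).ne'] at h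
  exact h

theorem series_bound_large_s (s c : ℝ) (hc : 0 < c) (hs : Real.sqrt c / 2 < s) :
    Summable (fun j : ℕ => Real.exp (2 * (j + 1) - c * (j + 1) ^ 2 / s ^ 2)) ∧
    ∑' j : ℕ, Real.exp (2 * (j + 1) - c * (j + 1) ^ 2 / s ^ 2) ≤
      8 * s ^ 2 / c + Real.exp ((1 + 1 / Real.exp 1) * s ^ 2 / c) := by
  have hs0 : 0 < s := lt_of_le_of_lt (by positivity) hs
  set a := s ^ 2 / c with ha_def
  have ha : 1 / 4 ≤ a := by
    rw [ha_def, le_div_iff₀ hc]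
    have h := pow_lt_pow_left₀ hs (by positivity) two_ne_zero
    rw [div_pow, sq_sqrt hc.le] at h
    linarith
  have hterm (j : ℕ) : exp (2 * (j + 1) - c * (j + 1) ^ 2 / s ^ 2) =
      exp a * exp (-((j : ℝ) + 1 - a) ^ 2 / a) := by
    rw [← exp_add, ha_def]
    congr 1
    field_simp
    ring
  simp_rw [hterm, tsum_mul_left]
  refine ⟨(summable_and_one_sub_mul_tsum_exp_neg_sq_div_le (by linarith)).1.mul_left _, ?_⟩
  calc exp a * ∑' j : ℕ, exp (-((j : ℝ) + 1 - a) ^ 2 / a)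
      ≤ exp a * (a * (1 + 8 * exp (-a))) := by gcongr; exact tsum_exp_neg_sq_div_le ha
    _ = 8 * a + a * exp a := by rw [exp_neg]; field_simp; ring
    _ ≤ 8 * a + exp (a / exp 1) * exp a := by gcongr; exact le_exp_div_exp_one a
    _ = 8 * s ^ 2 / c + exp ((1 + 1 / exp 1) * s ^ 2 / c) := by rw [← exp_add, ha_def]; ring_nf
end

section
/- Let X be a real random variable with E[X] = 0 such that for all t > 0, max{Pr(X ≥ t), Pr(X ≤ -t)} ≤ b·exp(-ct²), where b ≥ 1 and c > 0. Then for any s > 0, E[e^{sX}] ≤ e^{7bs²/c}. -/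
/-!
Squaring the tail bound gives `P(X² ≥ t) ≤ 2b e^{-ct}`, so by the layer-cake formula
`E[exp(λX²)] ≤ 1 + 2bλ/(c - λ)` for `0 ≤ λ < c`. For `s² ≤ c/2` the inequality
`e^y ≤ y + e^{y²}` and `E[X] = 0` give `E[e^{sX}] ≤ E[e^{s²X²}] ≤ 1 + 4bs²/c`; for larger `s`,
`sX ≤ s²/(2c) + cX²/2` gives `E[e^{sX}] ≤ e^{s²/(2c)} (1 + 2b)`, and `2b ≤ 4bs²/c`.
-/

open MeasureTheory Real Set

lemma Real.exp_le_add_exp_sq (y : ℝ) : exp y ≤ y + exp (y ^ 2) := by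
  have h := add_one_le_exp (y ^ 2)
  rcases le_or_gt |y| 1 with hy | hy
  · linarith [(abs_le.1 (abs_exp_sub_one_sub_id_le hy)).2]
  rcases lt_abs.1 hy with hy | hy
  · linarith [exp_le_exp.2 (show y ≤ y ^ 2 by nlinarith)]
  · linarith [exp_le_one_iff.2 (show y ≤ 0 by linarith), show 0 ≤ y + y ^ 2 by nlinarith]

lemma integral_mul_exp_mul (l x : ℝ) :
    ∫ t in (0 : ℝ)..x, l * exp (l * t) = exp (l * x) - 1 := by
  have hderiv (t : ℝ) : HasDerivAt (fun u ↦ exp (l * u)) (l * exp (l * t)) t := by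
    simpa [mul_comm] using ((hasDerivAt_id t).const_mul l).exp
  have hcont : Continuous fun t ↦ l * exp (l * t) := by fun_prop
  rw [intervalIntegral.integral_eq_sub_of_hasDerivAt (fun t _ ↦ hderiv t)
    (hcont.intervalIntegrable _ _), mul_zero, exp_zero]

section LayerCake

variable {α : Type*} [MeasurableSpace α] {μ : Measure α} {f : α → ℝ} {l : ℝ}

lemma lintegral_exp_mul_eq_add_lintegral_meas_le (hf_nn : 0 ≤ᵐ[μ] f) (hf : AEMeasurable f μ)
    (hl : 0 ≤ l) :
    ∫⁻ ω, ENNReal.ofReal (exp (l * f ω)) ∂μ =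
      (∫⁻ t in Ioi 0, μ {ω | t ≤ f ω} * ENNReal.ofReal (l * exp (l * t))) + μ univ := by
  have hpt : ∀ᵐ ω ∂μ, ENNReal.ofReal (exp (l * f ω)) =
      ENNReal.ofReal (∫ t in (0 : ℝ)..f ω, l * exp (l * t)) + 1 := by
    filter_upwards [hf_nn] with ω hω
    rw [integral_mul_exp_mul, ← ENNReal.ofReal_one,
      ← ENNReal.ofReal_add (by linarith [one_le_exp (mul_nonneg hl hω)]) zero_le_one,
      sub_add_cancel]
  rw [lintegral_congr_ae hpt, lintegral_add_right _ measurable_const, lintegral_one,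
    lintegral_comp_eq_lintegral_meas_le_mul μ hf_nn hf
      (fun t _ ↦ (by fun_prop : Continuous fun t ↦ l * exp (l * t)).intervalIntegrable 0 t)
      (.of_forall fun t ↦ by positivity)]

lemma lintegral_exp_mul_le_of_meas_le {K c : ℝ} (hf_nn : 0 ≤ᵐ[μ] f) (hf : AEMeasurable f μ)
    (hK : 0 ≤ K) (hl : 0 ≤ l) (hlc : l < c)
    (htail : ∀ t > 0, μ {ω | t ≤ f ω} ≤ ENNReal.ofReal (K * exp (-c * t))) :
    ∫⁻ ω, ENNReal.ofReal (exp (l * f ω)) ∂μ ≤ ENNReal.ofReal (K * l / (c - l)) + μ univ := by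
  rw [lintegral_exp_mul_eq_add_lintegral_meas_le hf_nn hf hl]
  gcongr
  have hcl : -(c - l) < 0 := by linarith
  calc ∫⁻ t in Ioi 0, μ {ω | t ≤ f ω} * ENNReal.ofReal (l * exp (l * t))
      ≤ ∫⁻ t in Ioi 0, ENNReal.ofReal (K * l * exp (-(c - l) * t)) := by
        refine setLIntegral_mono' measurableSet_Ioi fun t ht ↦ ?_
        calc μ {ω | t ≤ f ω} * ENNReal.ofReal (l * exp (l * t))
            ≤ ENNReal.ofReal (K * exp (-c * t)) * ENNReal.ofReal (l * exp (l * t)) := by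
              gcongr; exact htail t ht
          _ = ENNReal.ofReal (K * l * exp (-(c - l) * t)) := by
              rw [← ENNReal.ofReal_mul (by positivity), mul_mul_mul_comm, ← exp_add]
              ring_nf
    _ = ENNReal.ofReal (∫ t in Ioi 0, K * l * exp (-(c - l) * t)) :=
        (ofReal_integral_eq_lintegral_ofReal ((integrableOn_exp_mul_Ioi hcl 0).const_mul _)
          (.of_forall fun t ↦ by positivity)).symm
    _ = ENNReal.ofReal (K * l / (c - l)) := by
        rw [integral_const_mul, integral_exp_mul_Ioi hcl, mul_zero, exp_zero]
        congr 1
        field_simp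

end LayerCake

section Subgaussian

variable {Ω : Type*} [MeasurableSpace Ω] {μ : Measure Ω} {X : Ω → ℝ} {b c : ℝ}

lemma measure_sq_ge_le [IsFiniteMeasure μ]
    (htail : ∀ t : ℝ, 0 < t →
      max (μ {ω | t ≤ X ω}).toReal (μ {ω | X ω ≤ -t}).toReal ≤ b * exp (-c * t ^ 2))
    {t : ℝ} (ht : 0 < t) :
    μ {ω | t ≤ X ω ^ 2} ≤ ENNReal.ofReal (2 * b * exp (-c * t)) := by
  have hsqrt : 0 < √t := sqrt_pos.2 ht
  have hmax := htail √t hsqrt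
  rw [sq_sqrt ht.le] at hmax
  have hbound : 0 ≤ b * exp (-c * t) := ENNReal.toReal_nonneg.trans ((le_max_left _ _).trans hmax)
  have hsub : {ω | t ≤ X ω ^ 2} ⊆ {ω | √t ≤ X ω} ∪ {ω | X ω ≤ -√t} := by
    intro ω hω
    have h : √t ≤ |X ω| := by rw [← sqrt_sq_eq_abs]; exact sqrt_le_sqrt hω
    exact (le_abs'.1 h).symm
  calc μ {ω | t ≤ X ω ^ 2} ≤ μ {ω | √t ≤ X ω} + μ {ω | X ω ≤ -√t} :=
        (measure_mono hsub).trans (measure_union_le _ _)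
    _ ≤ ENNReal.ofReal (b * exp (-c * t)) + ENNReal.ofReal (b * exp (-c * t)) := by
        gcongr <;> rw [ENNReal.le_ofReal_iff_toReal_le (measure_ne_top μ _) hbound]
        exacts [(le_max_left _ _).trans hmax, (le_max_right _ _).trans hmax]
    _ = ENNReal.ofReal (2 * b * exp (-c * t)) := by
        rw [← ENNReal.ofReal_add hbound hbound]; ring_nf

lemma lintegral_exp_mul_sq_le [IsProbabilityMeasure μ] (hX : AEMeasurable X μ) (hb : 0 ≤ b)
    (htail : ∀ t : ℝ, 0 < t →
      max (μ {ω | t ≤ X ω}).toReal (μ {ω | X ω ≤ -t}).toReal ≤ b * exp (-c * t ^ 2))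
    {l : ℝ} (hl : 0 ≤ l) (hlc : l < c) :
    ∫⁻ ω, ENNReal.ofReal (exp (l * X ω ^ 2)) ∂μ ≤ ENNReal.ofReal (1 + 2 * b * l / (c - l)) := by
  have h := lintegral_exp_mul_le_of_meas_le (.of_forall fun ω ↦ sq_nonneg (X ω))
    (hX.pow_const 2) (by positivity) hl hlc fun t ht ↦ measure_sq_ge_le htail ht
  rwa [measure_univ, ← ENNReal.ofReal_one,
    ← ENNReal.ofReal_add (div_nonneg (by positivity) (by linarith)) zero_le_one, add_comm] at h

end Subgaussian

section ExpBounds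

variable {Ω : Type*} [MeasurableSpace Ω] {μ : Measure Ω}

lemma lintegral_exp_le_lintegral_exp_sq {Y : Ω → ℝ} (hY : Integrable Y μ)
    (hY0 : ∫ ω, Y ω ∂μ = 0) :
    ∫⁻ ω, ENNReal.ofReal (exp (Y ω)) ∂μ ≤ ∫⁻ ω, ENNReal.ofReal (exp (Y ω ^ 2)) ∂μ := by
  by_cases htop : ∫⁻ ω, ENNReal.ofReal (exp (Y ω ^ 2)) ∂μ = ⊤
  · exact htop ▸ le_top
  have hsq : Integrable (fun ω ↦ exp (Y ω ^ 2)) μ :=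
    (lintegral_ofReal_ne_top_iff_integrable (by fun_prop) (.of_forall fun _ ↦ exp_nonneg _)).1
      htop
  calc ∫⁻ ω, ENNReal.ofReal (exp (Y ω)) ∂μ
      ≤ ∫⁻ ω, ENNReal.ofReal (Y ω + exp (Y ω ^ 2)) ∂μ :=
        lintegral_mono fun ω ↦ ENNReal.ofReal_le_ofReal (exp_le_add_exp_sq (Y ω))
    _ = ENNReal.ofReal (∫ ω, (Y ω + exp (Y ω ^ 2)) ∂μ) :=
        (ofReal_integral_eq_lintegral_ofReal (hY.add hsq)
          (.of_forall fun ω ↦ (exp_nonneg _).trans (exp_le_add_exp_sq (Y ω)))).symm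
    _ = ∫⁻ ω, ENNReal.ofReal (exp (Y ω ^ 2)) ∂μ := by
        rw [integral_add hY hsq, hY0, zero_add,
          ofReal_integral_eq_lintegral_ofReal hsq (.of_forall fun _ ↦ exp_nonneg _)]

lemma lintegral_exp_mul_le_mul_lintegral_exp_sq (X : Ω → ℝ) (s : ℝ) {c : ℝ} (hc : 0 < c) :
    ∫⁻ ω, ENNReal.ofReal (exp (s * X ω)) ∂μ ≤
      ENNReal.ofReal (exp (s ^ 2 / (2 * c))) * ∫⁻ ω, ENNReal.ofReal (exp (c / 2 * X ω ^ 2)) ∂μ := by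
  rw [← lintegral_const_mul' _ _ ENNReal.ofReal_ne_top]
  refine lintegral_mono fun ω ↦ ?_
  rw [← ENNReal.ofReal_mul (exp_nonneg _), ← exp_add]
  gcongr
  rw [div_add' _ _ _ (by positivity), le_div_iff₀ (by positivity)]
  nlinarith [sq_nonneg (s - c * X ω)]

end ExpBounds

lemma one_add_div_le_exp_of_sq_le {b c s : ℝ} (hb : 0 ≤ b) (hc : 0 < c) (hs : s ^ 2 ≤ c / 2) :
    1 + 2 * b * s ^ 2 / (c - s ^ 2) ≤ exp (7 * b * s ^ 2 / c) := by
  have h : 2 * b * s ^ 2 / (c - s ^ 2) ≤ 7 * b * s ^ 2 / c := by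
    rw [div_le_div_iff₀ (by linarith) hc]
    nlinarith [mul_nonneg hb (sq_nonneg s), mul_nonneg (mul_nonneg hb (sq_nonneg s)) hc.le]
  linarith [add_one_le_exp (7 * b * s ^ 2 / c)]

lemma exp_mul_one_add_le_exp_of_le_sq {b c s : ℝ} (hb : 1 ≤ b) (hc : 0 < c) (hs : c / 2 ≤ s ^ 2) :
    exp (s ^ 2 / (2 * c)) * (1 + 2 * b) ≤ exp (7 * b * s ^ 2 / c) := by
  calc exp (s ^ 2 / (2 * c)) * (1 + 2 * b) ≤ exp (s ^ 2 / (2 * c)) * exp (2 * b) := by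
        gcongr; linarith [add_one_le_exp (2 * b)]
    _ = exp (s ^ 2 / (2 * c) + 2 * b) := (exp_add _ _).symm
    _ ≤ exp (7 * b * s ^ 2 / c) := by
        gcongr
        rw [div_add' _ _ _ (by positivity), div_le_div_iff₀ (by positivity) hc]
        nlinarith [mul_nonneg (mul_nonneg (by linarith : (0 : ℝ) ≤ b)
            (by linarith : 0 ≤ s ^ 2 - c / 2)) hc.le,
          mul_nonneg (mul_nonneg (by linarith : (0 : ℝ) ≤ b - 1) (sq_nonneg s)) hc.le,
          mul_nonneg (sq_nonneg s) hc.le]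

theorem mgf_bound_subgaussian_general {Ω : Type*} [MeasurableSpace Ω] (μ : Measure Ω)
    [IsProbabilityMeasure μ] (X : Ω → ℝ)
    (hint : Integrable X μ) (hmean : ∫ ω, X ω ∂μ = 0)
    (b c : ℝ) (hb : 1 ≤ b) (hc : 0 < c)
    (htail : ∀ t : ℝ, 0 < t →
      max (μ {ω | t ≤ X ω}).toReal (μ {ω | X ω ≤ -t}).toReal ≤ b * Real.exp (-c * t ^ 2)) :
    ∀ s : ℝ, 0 < s →
      ∫⁻ ω, ENNReal.ofReal (Real.exp (s * X ω)) ∂μ ≤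
        ENNReal.ofReal (Real.exp (7 * b * s ^ 2 / c)) := by
  intro s _
  have hb0 : 0 ≤ b := by linarith
  have hsq {l : ℝ} (hl : 0 ≤ l) (hlc : l < c) :=
    lintegral_exp_mul_sq_le hint.aemeasurable hb0 htail hl hlc
  rcases le_or_gt (s ^ 2) (c / 2) with hsc | hsc
  · calc ∫⁻ ω, ENNReal.ofReal (exp (s * X ω)) ∂μ
        ≤ ∫⁻ ω, ENNReal.ofReal (exp ((s * X ω) ^ 2)) ∂μ :=
          lintegral_exp_le_lintegral_exp_sq (hint.const_mul s)
            (by rw [integral_const_mul, hmean, mul_zero])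
      _ = ∫⁻ ω, ENNReal.ofReal (exp (s ^ 2 * X ω ^ 2)) ∂μ := by simp_rw [mul_pow]
      _ ≤ ENNReal.ofReal (1 + 2 * b * s ^ 2 / (c - s ^ 2)) := hsq (sq_nonneg s) (by linarith)
      _ ≤ _ := ENNReal.ofReal_le_ofReal (one_add_div_le_exp_of_sq_le hb0 hc hsc)
  · have hc2 : 1 + 2 * b * (c / 2) / (c - c / 2) = 1 + 2 * b := by field_simp; ring
    calc ∫⁻ ω, ENNReal.ofReal (exp (s * X ω)) ∂μ
        ≤ ENNReal.ofReal (exp (s ^ 2 / (2 * c))) *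
            ∫⁻ ω, ENNReal.ofReal (exp (c / 2 * X ω ^ 2)) ∂μ :=
          lintegral_exp_mul_le_mul_lintegral_exp_sq X s hc
      _ ≤ ENNReal.ofReal (exp (s ^ 2 / (2 * c))) * ENNReal.ofReal (1 + 2 * b) := by
          rw [← hc2]; gcongr; exact hsq (by positivity) (by linarith)
      _ = ENNReal.ofReal (exp (s ^ 2 / (2 * c)) * (1 + 2 * b)) :=
          (ENNReal.ofReal_mul (exp_nonneg _)).symm
      _ ≤ _ := ENNReal.ofReal_le_ofReal (exp_mul_one_add_le_exp_of_le_sq hb hc hsc.le)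

theorem mgf_bound_subgaussian {Ω : Type*} [MeasurableSpace Ω] (μ : Measure Ω)
    [IsProbabilityMeasure μ] (X : Ω → ℝ) (hX : Measurable X)
    (hint : Integrable X μ) (hmean : ∫ ω, X ω ∂μ = 0)
    (b c : ℝ) (hb : 1 ≤ b) (hc : 0 < c)
    (htail : ∀ t : ℝ, 0 < t →
      max (μ {ω | t ≤ X ω}).toReal (μ {ω | X ω ≤ -t}).toReal ≤ b * Real.exp (-c * t ^ 2)) :
    ∀ s : ℝ, 0 < s →
      ∫⁻ ω, ENNReal.ofReal (Real.exp (s * X ω)) ∂μ ≤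
        ENNReal.ofReal (Real.exp (7 * b * s ^ 2 / c)) :=
  mgf_bound_subgaussian_general μ X hint hmean b c hb hc htail
end
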